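/- arXiv:1804.01553 — 2 statements merged into one kernel-verified Lean document; each statement's English description precedes it below -/
import Mathlib

section
/- Let A, B be abelian groups and f : A → B, g : B → A homomorphisms with g ∘ f = 2·id_A and f ∘ g = 2·id_B. Suppose moreover there is an exact sequence 0 → C → X → Ker g → 0 and an exact sequence 0 → Coker f → X' → K → 0 together with an isomorphism X ≅ X' compatible with the maps (as in the comparison of norm-one and projective groups when G(2) = 0). Then there exists an exact sequence 0 → Ker β → C → K → Coker β → 0, where β : Coker f → Ker g is the induced map. -/
/-!
After transporting along `e`, both `C` and `Coker f` embed in the same group `X`, with quotients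
`Ker g` and `K` respectively. Then `β` and `γ` are the maps `Coker f → X / C` and `C → X / Coker f`
induced by these embeddings: both kernels are `C ∩ Coker f` and both cokernels are
`X / (C + Coker f)`, which is the four-term exact sequence.
-/

open Function

lemma Function.Exact.addEquiv_comp_comp_symm {M X X' K : Type*} [AddCommGroup M] [AddCommGroup X]
    [AddCommGroup X'] [AddCommGroup K] {q : M →+ X'} {p : X' →+ K} (h : Exact q p) (e : X' ≃+ X) :
    Exact (e.toAddMonoidHom.comp q) (p.comp e.symm.toAddMonoidHom) :=
  h.of_ladder_addEquiv_of_exact (AddEquiv.refl M) e (AddEquiv.refl K) rfl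
    (by ext; simp)

section

variable {M C X K N : Type*} [AddCommGroup M] [AddCommGroup C] [AddCommGroup X]
  [AddCommGroup K] [AddCommGroup N] {δ : C →+ X} {a : X →+ N} {q : M →+ X} {p : X →+ K}

noncomputable def kerCompLift (hδ : Injective δ) (h : Exact δ a) (q : M →+ X) :
    (a.comp q).ker →+ C :=
  (AddMonoidHom.ofInjective hδ).symm.toAddMonoidHom.comp
    ((q.comp (a.comp q).ker.subtype).codRestrict δ.range fun x => (h _).1 x.2)

@[simp]
lemma apply_kerCompLift (hδ : Injective δ) (h : Exact δ a) (x : (a.comp q).ker) :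
    δ (kerCompLift hδ h q x) = q x :=
  AddMonoidHom.apply_ofInjective_symm hδ _

lemma kerCompLift_injective (hδ : Injective δ) (h : Exact δ a) (hq : Injective q) :
    Injective (kerCompLift hδ h q) := fun x y hxy => by
  apply Subtype.ext (hq _)
  simpa using congrArg δ hxy

lemma exact_kerCompLift_comp (hδ : Injective δ) (h₁ : Exact δ a) (h₂ : Exact q p) :
    Exact (kerCompLift hδ h₁ q) (p.comp δ) := by
  intro c
  constructor
  · intro hc
    obtain ⟨m, hm⟩ := (h₂ _).1 hc
    refine ⟨⟨m, ?_⟩, hδ (by simpa using hm)⟩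
    show a (q m) = 0
    rw [hm]
    exact h₁.apply_apply_eq_zero c
  · rintro ⟨x, rfl⟩
    simpa using h₂.apply_apply_eq_zero x

noncomputable def cokerCompDesc (hp : Surjective p) (h : Exact q p) (a : X →+ N) :
    K →+ N ⧸ (a.comp q).range :=
  p.liftOfRightInverse (surjInv hp) (rightInverse_surjInv hp)
    ⟨(QuotientAddGroup.mk' _).comp a, fun x hx => by
      obtain ⟨m, rfl⟩ := (h x).1 hx
      exact (QuotientAddGroup.eq_zero_iff _).2 ⟨m, rfl⟩⟩

@[simp]
lemma cokerCompDesc_apply (hp : Surjective p) (h : Exact q p) (x : X) :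
    cokerCompDesc hp h a (p x) = a x :=
  p.liftOfRightInverse_comp_apply _ _ _ x

lemma cokerCompDesc_surjective (hp : Surjective p) (h : Exact q p) (ha : Surjective a) :
    Surjective (cokerCompDesc hp h a) := by
  intro z
  obtain ⟨y, rfl⟩ := QuotientAddGroup.mk'_surjective _ z
  obtain ⟨x, rfl⟩ := ha y
  exact ⟨p x, cokerCompDesc_apply hp h x⟩

lemma exact_comp_cokerCompDesc (h₁ : Exact δ a) (hp : Surjective p) (h₂ : Exact q p) :
    Exact (p.comp δ) (cokerCompDesc hp h₂ a) := by
  intro k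
  obtain ⟨x, rfl⟩ := hp k
  rw [cokerCompDesc_apply, QuotientAddGroup.eq_zero_iff]
  constructor
  · rintro ⟨m, hm⟩
    obtain ⟨c, hc⟩ := (h₁ (x - q m)).1 (by simpa [sub_eq_zero] using hm.symm)
    refine ⟨c, ?_⟩
    simp [hc, h₂.apply_apply_eq_zero]
  · rintro ⟨c, hc⟩
    obtain ⟨m, hm⟩ := (h₂ (x - δ c)).1 (by simpa [sub_eq_zero] using hc.symm)
    refine ⟨m, ?_⟩
    simp [hm, h₁.apply_apply_eq_zero]

end

theorem stmt4_general {A B C X X' K : Type*} [AddCommGroup A] [AddCommGroup B] [AddCommGroup C]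
    [AddCommGroup X] [AddCommGroup X'] [AddCommGroup K]
    (f : A →+ B) (g : B →+ A)
    (δ : C →+ X) (aX : X →+ g.ker) (hδ : Function.Injective δ)
    (ha : Function.Surjective aX) (hex1 : Function.Exact δ aX)
    (q : (B ⧸ f.range) →+ X') (pd : X' →+ K) (hq : Function.Injective q)
    (hpd : Function.Surjective pd) (hex2 : Function.Exact q pd)
    (e : X' ≃+ X) :
    ∀ (β : (B ⧸ f.range) →+ g.ker) (γ : C →+ K),
      β = aX.comp (e.toAddMonoidHom.comp q) →
      γ = pd.comp (e.symm.toAddMonoidHom.comp δ) →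
      ∃ (ι : β.ker →+ C) (p : K →+ (g.ker ⧸ β.range)),
        Function.Injective ι ∧
        (∀ x : β.ker, δ (ι x) = e (q (x : B ⧸ f.range))) ∧
        Function.Exact ι γ ∧
        (∀ x' : X', p (pd x') = QuotientAddGroup.mk (aX (e x'))) ∧
        Function.Exact γ p ∧ Function.Surjective p := by
  rintro β γ rfl rfl
  have hex2' := hex2.addEquiv_comp_comp_symm e
  have hpd' : Surjective (pd.comp e.symm.toAddMonoidHom) := hpd.comp e.symm.surjective
  refine ⟨kerCompLift hδ hex1 _, cokerCompDesc hpd' hex2' aX,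
    kerCompLift_injective hδ hex1 (e.injective.comp hq), apply_kerCompLift hδ hex1,
    exact_kerCompLift_comp hδ hex1 hex2', fun x' => ?_, exact_comp_cokerCompDesc hex1 hpd' hex2',
    cokerCompDesc_surjective hpd' hex2' ha⟩
  simpa using cokerCompDesc_apply hpd' hex2' (a := aX) (e x')

/-- Abstract form of Theorem 6.2: `f, g` play the roles of restriction and
corestriction with `g∘f = 2` and `f∘g = 2`; given exact sequences
`0 → C → X → Ker g → 0` and `0 → Coker f → X' → K → 0` and an isomorphism
`e : X' ≅ X`, the induced map `β : Coker f → Ker g` (namely `aX ∘ e ∘ q`) fits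
into an exact sequence `0 → Ker β → C → K → Coker β → 0`, the middle map being
the induced map `γ = pd ∘ e⁻¹ ∘ δ`. -/
theorem stmt4 {A B C X X' K : Type*} [AddCommGroup A] [AddCommGroup B] [AddCommGroup C]
    [AddCommGroup X] [AddCommGroup X'] [AddCommGroup K]
    (f : A →+ B) (g : B →+ A) (hgf : ∀ a : A, g (f a) = 2 • a)
    (hfg : ∀ b : B, f (g b) = 2 • b)
    (δ : C →+ X) (aX : X →+ g.ker) (hδ : Function.Injective δ)
    (ha : Function.Surjective aX) (hex1 : Function.Exact δ aX)
    (q : (B ⧸ f.range) →+ X') (pd : X' →+ K) (hq : Function.Injective q)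
    (hpd : Function.Surjective pd) (hex2 : Function.Exact q pd)
    (e : X' ≃+ X) :
    ∀ (β : (B ⧸ f.range) →+ g.ker) (γ : C →+ K),
      β = aX.comp (e.toAddMonoidHom.comp q) →
      γ = pd.comp (e.symm.toAddMonoidHom.comp δ) →
      ∃ (ι : β.ker →+ C) (p : K →+ (g.ker ⧸ β.range)),
        Function.Injective ι ∧
        (∀ x : β.ker, δ (ι x) = e (q (x : B ⧸ f.range))) ∧
        Function.Exact ι γ ∧
        (∀ x' : X', p (pd x') = QuotientAddGroup.mk (aX (e x'))) ∧
        Function.Exact γ p ∧ Function.Surjective p :=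
  stmt4_general f g δ aX hδ ha hex1 q pd hq hpd hex2 e
end

section
/- Let φ : R → P and ψ : P → R be homomorphisms of abelian groups with ψ ∘ φ = n·id_R, and suppose Ker φ ≅ G_n and Coker φ ≅ G/n for an abelian group G (n-torsion and mod-n quotient). Then there is an exact sequence 0 → G(n) → Ker ψ → G/n → R/nR → Coker ψ → 0, where G(n) = Coker(G_n ↪ R_n). -/
/-!
For `f : A →+ B` and `g : B →+ C`, the kernel–cokernel (snake) sequence of the composite reads
`0 → ker f → ker (g ∘ f) → ker g → coker f → coker (g ∘ f) → coker g → 0`.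
For `f = φ`, `g = ψ` and `ψ ∘ φ = n`, the kernel of the composite is the `n`-torsion `R_n` and
its cokernel is `R/nR`; folding `ker φ` into the first term and identifying `coker φ` with `G/n`
through `eC` gives the sequence of the lemma.
-/

open QuotientAddGroup

namespace AddMonoidHom

variable {A B C : Type*} [AddCommGroup A] [AddCommGroup B] [AddCommGroup C]
  (f : A →+ B) (g : B →+ C)

def kerCompToKer : (g.comp f).ker ⧸ f.ker.addSubgroupOf (g.comp f).ker →+ g.ker :=
  QuotientAddGroup.lift _ ((f.comp (g.comp f).ker.subtype).codRestrict g.ker fun x => x.2)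
    fun _ hx => Subtype.ext (AddSubgroup.mem_addSubgroupOf.1 hx)

def kerToCoker : g.ker →+ B ⧸ f.range :=
  (QuotientAddGroup.mk' f.range).comp g.ker.subtype

def cokerToCokerComp : B ⧸ f.range →+ C ⧸ (g.comp f).range :=
  QuotientAddGroup.lift _ ((QuotientAddGroup.mk' _).comp g) <| by
    rintro _ ⟨a, rfl⟩
    exact (eq_zero_iff _).2 ⟨a, rfl⟩

def cokerCompToCoker : C ⧸ (g.comp f).range →+ C ⧸ g.range :=
  QuotientAddGroup.map _ _ (AddMonoidHom.id C) <| by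
    rintro _ ⟨a, rfl⟩
    exact ⟨f a, rfl⟩

variable {f g}

@[simp]
theorem coe_kerCompToKer_mk (x : (g.comp f).ker) :
    (kerCompToKer f g (x : (g.comp f).ker ⧸ _) : B) = f x := rfl

@[simp]
theorem kerToCoker_apply (y : g.ker) : kerToCoker f g y = (y : B) := rfl

@[simp]
theorem cokerToCokerComp_mk (b : B) :
    cokerToCokerComp f g (b : B ⧸ f.range) = (g b : C ⧸ (g.comp f).range) := rfl

@[simp]
theorem cokerCompToCoker_mk (c : C) :
    cokerCompToCoker f g (c : C ⧸ (g.comp f).range) = (c : C ⧸ g.range) := rfl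

variable (f g)

theorem kerCompToKer_injective : Function.Injective (kerCompToKer f g) := by
  refine (injective_iff_map_eq_zero _).2 fun q hq => ?_
  induction q using QuotientAddGroup.induction_on with
  | H x =>
    have hfx : f x = 0 := by simpa using congrArg Subtype.val hq
    exact (eq_zero_iff _).2 (AddSubgroup.mem_addSubgroupOf.2 hfx)

theorem exact_kerCompToKer_kerToCoker : Function.Exact (kerCompToKer f g) (kerToCoker f g) := by
  intro y
  rw [kerToCoker_apply, eq_zero_iff]
  constructor
  · rintro ⟨a, ha⟩
    have hga : g (f a) = 0 := by rw [ha]; exact y.2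
    exact ⟨(⟨a, hga⟩ : (g.comp f).ker), Subtype.ext ha⟩
  · rintro ⟨q, rfl⟩
    induction q using QuotientAddGroup.induction_on with
    | H x => exact ⟨x, rfl⟩

theorem exact_kerToCoker_cokerToCokerComp :
    Function.Exact (kerToCoker f g) (cokerToCokerComp f g) := by
  intro q
  induction q using QuotientAddGroup.induction_on with
  | H b =>
    rw [cokerToCokerComp_mk, eq_zero_iff]
    constructor
    · rintro ⟨a, ha⟩
      have hker : g (b - f a) = 0 := by rw [map_sub, ← comp_apply, ha, sub_self]
      refine ⟨⟨b - f a, hker⟩, ?_⟩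
      have hfa : ((f a : B) : B ⧸ f.range) = 0 := (eq_zero_iff _).2 ⟨a, rfl⟩
      rw [kerToCoker_apply, mk_sub, hfa, sub_zero]
    · rintro ⟨y, hy⟩
      rw [kerToCoker_apply, QuotientAddGroup.eq] at hy
      obtain ⟨a, ha⟩ := hy
      refine ⟨a, ?_⟩
      rw [comp_apply, ha, map_add, map_neg, y.2.out, neg_zero, zero_add]

theorem exact_cokerToCokerComp_cokerCompToCoker :
    Function.Exact (cokerToCokerComp f g) (cokerCompToCoker f g) := by
  intro q
  induction q using QuotientAddGroup.induction_on with
  | H c =>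
    rw [cokerCompToCoker_mk, eq_zero_iff]
    constructor
    · rintro ⟨b, rfl⟩
      exact ⟨(b : B ⧸ f.range), cokerToCokerComp_mk b⟩
    · rintro ⟨q, hq⟩
      induction q using QuotientAddGroup.induction_on with
      | H b =>
        rw [cokerToCokerComp_mk, QuotientAddGroup.eq] at hq
        obtain ⟨a, ha⟩ := hq
        refine ⟨b + f a, ?_⟩
        rw [map_add, ← comp_apply, ha, add_neg_cancel_left]

theorem cokerCompToCoker_surjective : Function.Surjective (cokerCompToCoker f g) := by
  rintro ⟨c⟩
  exact ⟨c, rfl⟩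

end AddMonoidHom

theorem stmt11_general {G R P : Type*} [AddCommGroup G] [AddCommGroup R] [AddCommGroup P]
    (n : ℕ) (φ : R →+ P) (ψ : P →+ R)
    (hψφ : ∀ r : R, ψ (φ r) = n • r)
    (eC : (P ⧸ φ.range) ≃+ (G ⧸ (zsmulAddGroupHom (n : ℤ) : G →+ G).range)) :
    ∃ (e₁ : ((zsmulAddGroupHom (n : ℤ) : R →+ R).ker ⧸
          (φ.ker.addSubgroupOf (zsmulAddGroupHom (n : ℤ) : R →+ R).ker)) →+ ψ.ker)
      (e₂ : ψ.ker →+ (G ⧸ (zsmulAddGroupHom (n : ℤ) : G →+ G).range))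
      (e₃ : (G ⧸ (zsmulAddGroupHom (n : ℤ) : G →+ G).range) →+
          (R ⧸ (zsmulAddGroupHom (n : ℤ) : R →+ R).range))
      (e₄ : (R ⧸ (zsmulAddGroupHom (n : ℤ) : R →+ R).range) →+ (R ⧸ ψ.range)),
      (∀ x : (zsmulAddGroupHom (n : ℤ) : R →+ R).ker,
        ((e₁ (QuotientAddGroup.mk x)) : P) = φ (x : R)) ∧
      (∀ p : ψ.ker, e₂ p = eC (QuotientAddGroup.mk (p : P))) ∧
      (∀ p : P, e₃ (eC (QuotientAddGroup.mk p)) = QuotientAddGroup.mk (ψ p)) ∧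
      (∀ r : R, e₄ (QuotientAddGroup.mk r) = QuotientAddGroup.mk r) ∧
      Function.Injective e₁ ∧ Function.Exact e₁ e₂ ∧ Function.Exact e₂ e₃ ∧
      Function.Exact e₃ e₄ ∧ Function.Surjective e₄ := by
  have hcomp : ψ.comp φ = zsmulAddGroupHom (n : ℤ) := AddMonoidHom.ext fun r => by simp [hψφ]
  -- Replace multiplication by `n` on `R` with the composite itself, so the lemmas above apply.
  generalize (zsmulAddGroupHom (n : ℤ) : R →+ R) = k at hcomp ⊢
  subst hcomp
  refine ⟨φ.kerCompToKer ψ, eC.toAddMonoidHom.comp (φ.kerToCoker ψ),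
    (φ.cokerToCokerComp ψ).comp eC.symm.toAddMonoidHom, φ.cokerCompToCoker ψ,
    fun _ => rfl, fun _ => rfl, fun _ => by simp, fun _ => rfl, φ.kerCompToKer_injective ψ,
    (φ.exact_kerCompToKer_kerToCoker ψ).comp_injective _ eC.injective (map_zero eC), ?_, ?_,
    φ.cokerCompToCoker_surjective ψ⟩
  · exact (φ.exact_kerToCoker_cokerToCokerComp ψ).of_ladder_addEquiv_of_exact
      (AddEquiv.refl _) eC (AddEquiv.refl _) (by ext; rfl) (by ext; simp)
  · exact (φ.exact_cokerToCokerComp_cokerCompToCoker ψ).of_ladder_addEquiv_of_exact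
      eC (AddEquiv.refl _) (AddEquiv.refl _) (by ext; simp) (by ext; rfl)

/-- Abstract form of Lemma 4.2: for `φ : R → P` with `Ker φ ≅ G_n`,
`Coker φ ≅ G/n` (via `eC`), and `ψ : P → R` with `ψ∘φ = n`, there is an exact
sequence `0 → G(n) → Ker ψ → G/n → R/nR → Coker ψ → 0`, where
`G(n) = R_n/Ker φ` (with `Ker φ ≅ G_n` sitting inside the `n`-torsion `R_n`). -/
theorem stmt11 {G R P : Type*} [AddCommGroup G] [AddCommGroup R] [AddCommGroup P]
    (n : ℕ) (hn : 1 ≤ n) (φ : R →+ P) (ψ : P →+ R)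
    (hψφ : ∀ r : R, ψ (φ r) = n • r)
    (eK : φ.ker ≃+ (zsmulAddGroupHom (n : ℤ) : G →+ G).ker)
    (eC : (P ⧸ φ.range) ≃+ (G ⧸ (zsmulAddGroupHom (n : ℤ) : G →+ G).range)) :
    ∃ (e₁ : ((zsmulAddGroupHom (n : ℤ) : R →+ R).ker ⧸
          (φ.ker.addSubgroupOf (zsmulAddGroupHom (n : ℤ) : R →+ R).ker)) →+ ψ.ker)
      (e₂ : ψ.ker →+ (G ⧸ (zsmulAddGroupHom (n : ℤ) : G →+ G).range))
      (e₃ : (G ⧸ (zsmulAddGroupHom (n : ℤ) : G →+ G).range) →+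
          (R ⧸ (zsmulAddGroupHom (n : ℤ) : R →+ R).range))
      (e₄ : (R ⧸ (zsmulAddGroupHom (n : ℤ) : R →+ R).range) →+ (R ⧸ ψ.range)),
      (∀ x : (zsmulAddGroupHom (n : ℤ) : R →+ R).ker,
        ((e₁ (QuotientAddGroup.mk x)) : P) = φ (x : R)) ∧
      (∀ p : ψ.ker, e₂ p = eC (QuotientAddGroup.mk (p : P))) ∧
      (∀ p : P, e₃ (eC (QuotientAddGroup.mk p)) = QuotientAddGroup.mk (ψ p)) ∧
      (∀ r : R, e₄ (QuotientAddGroup.mk r) = QuotientAddGroup.mk r) ∧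
      Function.Injective e₁ ∧ Function.Exact e₁ e₂ ∧ Function.Exact e₂ e₃ ∧
      Function.Exact e₃ e₄ ∧ Function.Surjective e₄ :=
  stmt11_general n φ ψ hψφ eC
end
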